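/- arXiv:2008.12623 — 6 statements merged into one kernel-verified Lean document; each statement's English description precedes it below -/
import Mathlib

section
/- Let V and A be binary random variables and B a binary random vector. If for every realization b of B we have P(A=1 | B=b, V=1) ≠ P(A=1 | B=b, V=0), then the joint distribution P(A, B) together with the conditional distribution P(A | V, B) uniquely determine the conditional distribution P(V | A, B). Formally: if two joint distributions over (V, A, B) agree on P(A, B) and on P(A | V, B), and the sensitivity condition holds, then they agree on P(V | A, B) wherever it is defined. -/
/-- Theorem 1: if two joint pmfs `p, q` over `(V, A, B)` (encoded as `p v a b`) agree on
`P(A, B)` and on `P(A | V, B)` (wherever defined), `P(A | V, B)` is defined on the support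
of `B` for both, and value-sensitivity holds for `p`, then they agree on `P(V | A, B)`
wherever it is defined. -/
theorem stmt_0 {n : ℕ} (p q : Fin 2 → Fin 2 → (Fin n → Fin 2) → ℝ)
    (hpnn : ∀ v a b, 0 ≤ p v a b) (hpsum : ∑ v, ∑ a, ∑ b, p v a b = 1)
    (hqnn : ∀ v a b, 0 ≤ q v a b) (hqsum : ∑ v, ∑ a, ∑ b, q v a b = 1)
    -- agreement on P(A, B)
    (hAB : ∀ a b, ∑ v, p v a b = ∑ v, q v a b)
    -- agreement on P(A | V, B) wherever both are defined
    (hAcond : ∀ v b, 0 < ∑ a, p v a b → 0 < ∑ a, q v a b →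
      ∀ a, p v a b / (∑ a', p v a' b) = q v a b / (∑ a', q v a' b))
    -- P(A | V, B) is defined on the support of B
    (hposp : ∀ b, 0 < ∑ v, ∑ a, p v a b → ∀ v, 0 < ∑ a, p v a b)
    (hposq : ∀ b, 0 < ∑ v, ∑ a, q v a b → ∀ v, 0 < ∑ a, q v a b)
    -- value-sensitivity for p
    (hsens : ∀ b, 0 < ∑ a, p 0 a b → 0 < ∑ a, p 1 a b →
      p 1 1 b / (∑ a, p 1 a b) ≠ p 0 1 b / (∑ a, p 0 a b)) :
    ∀ a b, 0 < ∑ v, p v a b → 0 < ∑ v, q v a b →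
      ∀ v, p v a b / (∑ v', p v' a b) = q v a b / (∑ v', q v' a b) := by
  intro a b hpab hqab v
  have hpB : 0 < ∑ v, ∑ a, p v a b :=
    lt_of_lt_of_le hpab (Finset.sum_le_sum fun v _ =>
      Finset.single_le_sum (fun a' _ => hpnn v a' b) (Finset.mem_univ a))
  have hqB : 0 < ∑ v, ∑ a, q v a b :=
    lt_of_lt_of_le hqab (Finset.sum_le_sum fun v _ =>
      Finset.single_le_sum (fun a' _ => hqnn v a' b) (Finset.mem_univ a))
  have hA0 := hposp b hpB 0
  have hA1 := hposp b hpB 1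
  have hB0 := hposq b hqB 0
  have hB1 := hposq b hqB 1
  have e : ∀ v a', p v a' b * (∑ a2, q v a2 b) = q v a' b * (∑ a2, p v a2 b) := by
    intro v a'
    exact (div_eq_div_iff (hposp b hpB v).ne' (hposq b hqB v).ne').mp
      (hAcond v b (hposp b hpB v) (hposq b hqB v) a')
  have htot : (∑ a, p 0 a b) + (∑ a, p 1 a b) = (∑ a, q 0 a b) + (∑ a, q 1 a b) := by
    have h1 : ∑ v, ∑ a, p v a b = ∑ v, ∑ a, q v a b := by
      calc ∑ v, ∑ a, p v a b = ∑ a, ∑ v, p v a b := Finset.sum_comm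
        _ = ∑ a, ∑ v, q v a b := Finset.sum_congr rfl fun a _ => hAB a b
        _ = ∑ v, ∑ a, q v a b := Finset.sum_comm
    simpa [Fin.sum_univ_two] using h1
  have hsum1 : p 0 1 b + p 1 1 b = q 0 1 b + q 1 1 b := by
    simpa [Fin.sum_univ_two] using hAB 1 b
  have hs' : p 1 1 b * (∑ a, p 0 a b) ≠ p 0 1 b * (∑ a, p 1 a b) := by
    intro h
    exact hsens b hA0 hA1 ((div_eq_div_iff hA1.ne' hA0.ne').mpr h)
  have key : ((∑ a, p 0 a b) - (∑ a, q 0 a b)) *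
      (p 0 1 b * (∑ a, p 1 a b) - p 1 1 b * (∑ a, p 0 a b)) = 0 := by
    have e01 := e 0 1
    have e11 := e 1 1
    linear_combination (-(∑ a, p 1 a b)) * e01 + (-(∑ a, p 0 a b)) * e11 +
      ((∑ a, p 0 a b) * (∑ a, p 1 a b)) * hsum1 + (-(p 1 1 b * (∑ a, p 0 a b))) * htot
  have ht0 : (∑ a, p 0 a b) = (∑ a, q 0 a b) := by
    rcases mul_eq_zero.mp key with h | h
    · linarith
    · exact absurd (by linarith : p 1 1 b * (∑ a, p 0 a b) = p 0 1 b * (∑ a, p 1 a b)) hs'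
  have ht1 : (∑ a, p 1 a b) = (∑ a, q 1 a b) := by linarith
  have hpq : ∀ v a', q v a' b = p v a' b := by
    intro v a'
    fin_cases v
    · show q 0 a' b = p 0 a' b
      have ev := e 0 a'
      rw [← ht0] at ev; exact (mul_right_cancel₀ hA0.ne' ev).symm
    · show q 1 a' b = p 1 a' b
      have ev := e 1 a'
      rw [← ht1] at ev; exact (mul_right_cancel₀ hA1.ne' ev).symm
  have hsq : (∑ v', q v' a b) = ∑ v', p v' a b :=
    Finset.sum_congr rfl fun v' _ => hpq v' a
  rw [hpq v a, hsq]
end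

section
/- If the joint distribution of (V, A, B) factorizes according to a DAG in which the node A has no children, then P(A | V, B) = P(A | Pa(A)), i.e., A is conditionally independent of all non-parent variables given its parents. Consequently, under the value-sensitivity assumption, the distributions P(A, B) and P(A | Pa(A)) uniquely identify P(V | A, B). -/
/-!
Since `A` has no children, its kernel `f_A` is the only factor of the Markov factorization that
involves `x_A`, and the other factors do not see `x_A`; marginalizing `x_A` out therefore only uses
the normalization of `f_A`. This gives `p = f_A · P(V, B)` and `P(A, Pa(A)) = f_A · P(Pa(A))`, so
`P(A | V, B) = f_A = P(A | Pa(A))`.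

For the identification, `P(A = a, B = b) = ∑ᵥ P(A = a | V = v, B = b) · P(V = v, B = b)` presents
the known law of `(A, B)` as a two-component mixture with known components `P(A | Pa(A))`.
Value-sensitivity makes the two components distinct, which determines the weights `P(V, B = b)`,
and with them `P(V | A, B)`.
-/

open Finset

/-- Marginal probability `P(X_s = x|_s)` of the event that the variables in `s`
take the values prescribed by `x`, for a joint pmf `p` on `ι → Fin 2`. -/
noncomputable def Pm {ι : Type} [Fintype ι] [DecidableEq ι]
    (p : (ι → Fin 2) → ℝ) (s : Finset ι) (x : ι → Fin 2) : ℝ :=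
  ∑ y ∈ Finset.univ.filter (fun y : ι → Fin 2 => ∀ i ∈ s, y i = x i), p y

-- The matrix `(c v a)` is invertible: by the row sums its determinant is `c 1 1 - c 0 1`.
lemma mixture_weights_eq {c : Fin 2 → Fin 2 → ℝ} {w w' : Fin 2 → ℝ}
    (hc : ∀ v, c v 0 + c v 1 = 1) (hne : c 1 1 ≠ c 0 1)
    (h : ∀ a, ∑ v, c v a * w v = ∑ v, c v a * w' v) : w = w' := by
  have h0 := h 0
  have h1 := h 1
  simp only [Fin.sum_univ_two] at h0 h1
  have hsum : w 0 + w 1 = w' 0 + w' 1 := by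
    linear_combination h0 + h1 - (w 0 - w' 0) * hc 0 - (w 1 - w' 1) * hc 1
  have hdet : (c 1 1 - c 0 1) * (w 1 - w' 1) = 0 := by linear_combination h1 - c 0 1 * hsum
  have hw1 : w 1 = w' 1 := sub_eq_zero.mp ((mul_eq_zero.mp hdet).resolve_left (sub_ne_zero.mpr hne))
  funext v
  fin_cases v
  · simpa [hw1] using hsum
  · exact hw1

section Marginal

variable {ι : Type} [Fintype ι] [DecidableEq ι] (p : (ι → Fin 2) → ℝ)

lemma Pm_congr (s : Finset ι) {x y : ι → Fin 2} (h : ∀ i ∈ s, x i = y i) :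
    Pm p s x = Pm p s y := by
  unfold Pm
  congr 1
  exact filter_congr fun z _ => forall₂_congr fun i hi => by rw [h i hi]

lemma Pm_erase_update (k : ι) (x : ι → Fin 2) (a : Fin 2) :
    Pm p (univ.erase k) (Function.update x k a) = Pm p (univ.erase k) x :=
  Pm_congr p _ fun _ hi => Function.update_of_ne (ne_of_mem_erase hi) _ _

lemma Pm_le_Pm_of_subset (hp0 : ∀ x, 0 ≤ p x) {s t : Finset ι} (hst : s ⊆ t) (x : ι → Fin 2) :
    Pm p t x ≤ Pm p s x :=
  sum_le_sum_of_subset_of_nonneg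
    (fun _ hy => mem_filter.mpr ⟨mem_univ _, fun i hi => (mem_filter.mp hy).2 i (hst hi)⟩)
    fun y _ _ => hp0 y

lemma Pm_univ (x : ι → Fin 2) : Pm p univ x = p x := by
  have : univ.filter (fun y : ι → Fin 2 => ∀ i ∈ univ, y i = x i) = {x} := by
    ext y
    simp [funext_iff]
  rw [Pm, this, sum_singleton]

lemma Pm_eq_sum_insert {s : Finset ι} {k : ι} (hk : k ∉ s) (x : ι → Fin 2) :
    Pm p s x = ∑ v : Fin 2, Pm p (insert k s) (Function.update x k v) := by
  have hfiber : ∀ v : Fin 2,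
      univ.filter (fun y : ι → Fin 2 => ∀ i ∈ insert k s, y i = Function.update x k v i) =
        (univ.filter fun y : ι → Fin 2 => ∀ i ∈ s, y i = x i).filter (fun y => y k = v) := by
    intro v
    rw [filter_filter]
    refine filter_congr fun y _ => ?_
    rw [forall_mem_insert, Function.update_self, and_comm]
    refine and_congr_left' (forall₂_congr fun i hi => ?_)
    rw [Function.update_of_ne (ne_of_mem_of_not_mem hi hk)]
  simp only [Pm, hfiber]
  exact (sum_fiberwise_of_maps_to (fun y _ => mem_univ (y k)) p).symm

lemma Pm_erase_eq_sum (k : ι) (x : ι → Fin 2) :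
    Pm p (univ.erase k) x = ∑ v : Fin 2, p (Function.update x k v) := by
  simp only [Pm_eq_sum_insert p (notMem_erase k univ), insert_erase (mem_univ k), Pm_univ]

lemma Pm_insert_update_of_update_invariant {k : ι} (hp : ∀ y w, p (Function.update y k w) = p y)
    (s : Finset ι) (x : ι → Fin 2) (v : Fin 2) :
    Pm p (insert k s) (Function.update x k v) = Pm p (insert k s) x := by
  refine sum_nbij' (Function.update · k (x k)) (Function.update · k v) ?_ ?_ ?_ ?_ ?_ <;>
    intro y hy
  all_goals simp only [mem_filter, mem_univ, true_and, forall_mem_insert, Function.update_self,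
    Function.update_idem] at hy ⊢
  · intro i hi; rw [Function.update_apply, hy.2 i hi, Function.update_apply]; split_ifs <;> simp_all
  · intro i hi; simp only [Function.update_apply, hy.2 i hi]
  · rw [← hy.1, Function.update_eq_self]
  · rw [← hy.1, Function.update_eq_self]
  · rw [hp]

end Marginal

section Markov

variable {ι : Type} [Fintype ι] [DecidableEq ι]

-- `f i` plays the role of the kernel `P(X_i | Pa(X_i))`.
structure IsMarkovFactorization (par : ι → Finset ι) (p : (ι → Fin 2) → ℝ)
    (f : ι → (ι → Fin 2) → ℝ) : Prop where
  kernel_congr : ∀ i x y, x i = y i → (∀ j ∈ par i, x j = y j) → f i x = f i y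
  sum_kernel_update : ∀ i x, ∑ v : Fin 2, f i (Function.update x i v) = 1
  apply_eq_prod : ∀ x, p x = ∏ i, f i x

namespace IsMarkovFactorization

variable {par : ι → Finset ι} {p q : (ι → Fin 2) → ℝ} {f g : ι → (ι → Fin 2) → ℝ} {k : ι}

lemma prod_erase_update (hF : IsMarkovFactorization par p f) (hk : ∀ i, k ∉ par i)
    (x : ι → Fin 2) (w : Fin 2) :
    ∏ i ∈ univ.erase k, f i (Function.update x k w) = ∏ i ∈ univ.erase k, f i x :=
  prod_congr rfl fun i hi =>
    hF.kernel_congr i _ _ (Function.update_of_ne (ne_of_mem_erase hi) _ _)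
      fun _ hj => Function.update_of_ne (ne_of_mem_of_not_mem hj (hk i)) _ _

lemma Pm_insert_eq_mul (hF : IsMarkovFactorization par p f) (hk : ∀ i, k ∉ par i)
    {s : Finset ι} (hks : k ∉ s) (hpar : par k ⊆ s) (x : ι → Fin 2) :
    Pm p (insert k s) x = f k x * Pm p s x := by
  set r : (ι → Fin 2) → ℝ := fun y => ∏ i ∈ univ.erase k, f i y
  have hpr : ∀ z, Pm p (insert k s) z = f k z * Pm r (insert k s) z := by
    intro z
    rw [Pm, Pm, mul_sum]
    refine sum_congr rfl fun y hy => ?_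
    have hyz := (mem_filter.mp hy).2
    rw [hF.apply_eq_prod, ← mul_prod_erase univ _ (mem_univ k),
      hF.kernel_congr k y z (hyz k (mem_insert_self _ _))
        fun j hj => hyz j (mem_insert_of_mem (hpar hj))]
  have hs : Pm p s x = Pm r (insert k s) x := calc
    Pm p s x = ∑ v, Pm p (insert k s) (Function.update x k v) := Pm_eq_sum_insert p hks x
    _ = ∑ v, f k (Function.update x k v) * Pm r (insert k s) x := by
      simp only [hpr, Pm_insert_update_of_update_invariant r (hF.prod_erase_update hk)]
    _ = Pm r (insert k s) x := by rw [← sum_mul, hF.sum_kernel_update, one_mul]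
  rw [hpr, hs]

lemma apply_eq_mul_Pm_erase (hF : IsMarkovFactorization par p f) (hk : ∀ i, k ∉ par i)
    (x : ι → Fin 2) : p x = f k x * Pm p (univ.erase k) x := by
  simpa only [insert_erase (mem_univ k), Pm_univ] using
    hF.Pm_insert_eq_mul hk (notMem_erase k univ) (subset_erase.mpr ⟨subset_univ _, hk k⟩) x

lemma div_Pm_erase (hF : IsMarkovFactorization par p f) (hk : ∀ i, k ∉ par i) {x : ι → Fin 2}
    (hx : Pm p (univ.erase k) x ≠ 0) : p x / Pm p (univ.erase k) x = f k x := by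
  rw [hF.apply_eq_mul_Pm_erase hk x, mul_div_cancel_right₀ _ hx]

lemma Pm_insert_parents_div (hF : IsMarkovFactorization par p f) (hk : ∀ i, k ∉ par i)
    {x : ι → Fin 2} (hx : Pm p (par k) x ≠ 0) :
    Pm p (insert k (par k)) x / Pm p (par k) x = f k x := by
  rw [hF.Pm_insert_eq_mul hk (hk k) subset_rfl x, mul_div_cancel_right₀ _ hx]

lemma div_Pm_erase_eq_div_Pm_parents (hF : IsMarkovFactorization par p f) (hk : ∀ i, k ∉ par i)
    {x : ι → Fin 2} (hx : Pm p (univ.erase k) x ≠ 0) (hpa : Pm p (par k) x ≠ 0) :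
    p x / Pm p (univ.erase k) x = Pm p (insert k (par k)) x / Pm p (par k) x := by
  rw [hF.div_Pm_erase hk hx, hF.Pm_insert_parents_div hk hpa]

lemma Pm_erase_update_eq_sum (hF : IsMarkovFactorization par p f) (hk : ∀ i, k ∉ par i)
    {j : ι} (hjk : j ≠ k) (x : ι → Fin 2) (a : Fin 2) :
    Pm p (univ.erase j) (Function.update x k a) =
      ∑ v, f k (Function.update (Function.update x j v) k a) *
        Pm p (univ.erase k) (Function.update x j v) := by
  refine (Pm_erase_eq_sum p j _).trans (sum_congr rfl fun v _ => ?_)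
  rw [Function.update_comm hjk.symm, hF.apply_eq_mul_Pm_erase hk, Pm_erase_update]

lemma kernel_eq_of_cond_eq (hF : IsMarkovFactorization par p f) (hk : ∀ i, k ∉ par i)
    (hG : IsMarkovFactorization par q g) (hp0 : ∀ x, 0 ≤ p x) (hq0 : ∀ x, 0 ≤ q x)
    (hcond : ∀ x, 0 < Pm p (par k) x → 0 < Pm q (par k) x →
      Pm p (insert k (par k)) x / Pm p (par k) x = Pm q (insert k (par k)) x / Pm q (par k) x)
    {x : ι → Fin 2} (hpx : 0 < Pm p (univ.erase k) x) (hqx : 0 < Pm q (univ.erase k) x) :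
    f k x = g k x := by
  have hpar : par k ⊆ univ.erase k := subset_erase.mpr ⟨subset_univ _, hk k⟩
  have hpx' := hpx.trans_le (Pm_le_Pm_of_subset p hp0 hpar x)
  have hqx' := hqx.trans_le (Pm_le_Pm_of_subset q hq0 hpar x)
  rw [← hF.Pm_insert_parents_div hk hpx'.ne', ← hG.Pm_insert_parents_div hk hqx'.ne']
  exact hcond x hpx' hqx'

lemma Pm_erase_update_eq_of_kernel_ne (hF : IsMarkovFactorization par p f) (hk : ∀ i, k ∉ par i)
    (hG : IsMarkovFactorization par q g) {j : ι} (hjk : j ≠ k) {x : ι → Fin 2}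
    (hker : ∀ v a, f k (Function.update (Function.update x j v) k a) =
      g k (Function.update (Function.update x j v) k a))
    (hne : f k (Function.update (Function.update x j 1) k 1) ≠
      f k (Function.update (Function.update x j 0) k 1))
    (hmarg : ∀ a, Pm p (univ.erase j) (Function.update x k a) =
      Pm q (univ.erase j) (Function.update x k a)) (v : Fin 2) :
    Pm p (univ.erase k) (Function.update x j v) = Pm q (univ.erase k) (Function.update x j v) := by
  refine congrFun (mixture_weights_eq (w := fun v => Pm p (univ.erase k) (Function.update x j v))
    (w' := fun v => Pm q (univ.erase k) (Function.update x j v))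
    (c := fun v a => f k (Function.update (Function.update x j v) k a))
    (fun v => ?_) hne fun a => ?_) v
  · simpa only [Fin.sum_univ_two] using hF.sum_kernel_update k (Function.update x j v)
  · have hmix := hmarg a
    rw [hF.Pm_erase_update_eq_sum hk hjk, hG.Pm_erase_update_eq_sum hk hjk] at hmix
    simpa only [hker] using hmix

end IsMarkovFactorization

end Markov

theorem stmt_4_general {ι : Type} [Fintype ι] [DecidableEq ι]
    (par : ι → Finset ι)
    (vI aI : ι) (hva : vI ≠ aI)
    (hnoch : ∀ i, aI ∉ par i)                          -- A has no children
    (p q : (ι → Fin 2) → ℝ)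
    (hp0 : ∀ x, 0 ≤ p x)
    (hq0 : ∀ x, 0 ≤ q x)
    (fp fq : ι → (ι → Fin 2) → ℝ)
    (hfp_loc : ∀ i x y, x i = y i → (∀ j ∈ par i, x j = y j) → fp i x = fp i y)
    (hfp_norm : ∀ i x, ∑ v : Fin 2, fp i (Function.update x i v) = 1)
    (hfp_fact : ∀ x, p x = ∏ i, fp i x)                -- p is Markov w.r.t. the DAG
    (hfq_loc : ∀ i x y, x i = y i → (∀ j ∈ par i, x j = y j) → fq i x = fq i y)
    (hfq_norm : ∀ i x, ∑ v : Fin 2, fq i (Function.update x i v) = 1)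
    (hfq_fact : ∀ x, q x = ∏ i, fq i x)                -- q is Markov w.r.t. the DAG
    -- positivity of P(B=b, V=v) on the support of (A, B), for both p and q
    (hpos : ∀ x, 0 < Pm p (Finset.univ.erase vI) x → ∀ v : Fin 2,
      0 < Pm p (Finset.univ.erase aI) (Function.update x vI v) ∧
      0 < Pm q (Finset.univ.erase aI) (Function.update x vI v))
    -- value-sensitivity for p
    (hsens : ∀ x : ι → Fin 2,
      0 < Pm p (Finset.univ.erase aI) (Function.update x vI 0) →
      0 < Pm p (Finset.univ.erase aI) (Function.update x vI 1) →
      p (Function.update (Function.update x vI 1) aI 1) /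
          Pm p (Finset.univ.erase aI) (Function.update x vI 1) ≠
        p (Function.update (Function.update x vI 0) aI 1) /
          Pm p (Finset.univ.erase aI) (Function.update x vI 0))
    -- agreement on P(A, B)
    (hAB : ∀ x, Pm p (Finset.univ.erase vI) x = Pm q (Finset.univ.erase vI) x)
    -- agreement on P(A | Pa(A))
    (hApa : ∀ x, 0 < Pm p (par aI) x → 0 < Pm q (par aI) x →
      Pm p (insert aI (par aI)) x / Pm p (par aI) x =
        Pm q (insert aI (par aI)) x / Pm q (par aI) x) :
    -- (1) A is conditionally independent of the non-parents given its parents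
    (∀ x, 0 < Pm p (Finset.univ.erase aI) x → 0 < Pm p (par aI) x →
      p x / Pm p (Finset.univ.erase aI) x =
        Pm p (insert aI (par aI)) x / Pm p (par aI) x) ∧
    -- (2) p and q agree on P(V | A, B)
    (∀ x, 0 < Pm p (Finset.univ.erase vI) x →
      p x / Pm p (Finset.univ.erase vI) x = q x / Pm q (Finset.univ.erase vI) x) := by
  have hFp : IsMarkovFactorization par p fp := ⟨hfp_loc, hfp_norm, hfp_fact⟩
  have hFq : IsMarkovFactorization par q fq := ⟨hfq_loc, hfq_norm, hfq_fact⟩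
  refine ⟨fun x hx hpa => hFp.div_Pm_erase_eq_div_Pm_parents hnoch hx.ne' hpa.ne', fun x hx => ?_⟩
  have hpos' : ∀ v a,
      0 < Pm p (univ.erase aI) (Function.update (Function.update x vI v) aI a) ∧
      0 < Pm q (univ.erase aI) (Function.update (Function.update x vI v) aI a) := fun v a => by
    simpa only [Pm_erase_update] using hpos x hx v
  have hker : ∀ v a, fp aI (Function.update (Function.update x vI v) aI a) =
      fq aI (Function.update (Function.update x vI v) aI a) := fun v a =>
    hFp.kernel_eq_of_cond_eq hnoch hFq hp0 hq0 hApa (hpos' v a).1 (hpos' v a).2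
  have hne := hsens x (hpos x hx 0).1 (hpos x hx 1).1
  rw [← Pm_erase_update p aI _ 1, ← Pm_erase_update p aI (Function.update x vI 0) 1,
    hFp.div_Pm_erase hnoch (hpos' 1 1).1.ne', hFp.div_Pm_erase hnoch (hpos' 0 1).1.ne'] at hne
  have hmarg := hFp.Pm_erase_update_eq_of_kernel_ne hnoch hFq hva hker hne (fun a => hAB _) (x vI)
  have hkerx := hker (x vI) (x aI)
  simp only [Function.update_eq_self] at hmarg hkerx
  rw [hFp.apply_eq_mul_Pm_erase hnoch, hFq.apply_eq_mul_Pm_erase hnoch, hkerx, hmarg, hAB]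

/-- Corollary 2: in a Bayesian network (joint pmf Markov w.r.t. a DAG, given by a
factorization into normalized kernels, each depending only on its node and its parents)
in which the anchor node `aI` has no children, `P(A | V, B) = P(A | Pa(A))`; consequently,
under value-sensitivity, `P(A, B)` and `P(A | Pa(A))` uniquely identify `P(V | A, B)`. -/
theorem stmt_4 {ι : Type} [Fintype ι] [DecidableEq ι]
    (par : ι → Finset ι) (ord : ι → ℕ)
    (hacyc : ∀ i, ∀ j ∈ par i, ord j < ord i)          -- the parent relation is a DAG
    (vI aI : ι) (hva : vI ≠ aI)
    (hnoch : ∀ i, aI ∉ par i)                          -- A has no children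
    (p q : (ι → Fin 2) → ℝ)
    (hp0 : ∀ x, 0 ≤ p x) (hp1 : ∑ x, p x = 1)
    (hq0 : ∀ x, 0 ≤ q x) (hq1 : ∑ x, q x = 1)
    (fp fq : ι → (ι → Fin 2) → ℝ)
    (hfp_nn : ∀ i x, 0 ≤ fp i x)
    (hfp_loc : ∀ i x y, x i = y i → (∀ j ∈ par i, x j = y j) → fp i x = fp i y)
    (hfp_norm : ∀ i x, ∑ v : Fin 2, fp i (Function.update x i v) = 1)
    (hfp_fact : ∀ x, p x = ∏ i, fp i x)                -- p is Markov w.r.t. the DAG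
    (hfq_nn : ∀ i x, 0 ≤ fq i x)
    (hfq_loc : ∀ i x y, x i = y i → (∀ j ∈ par i, x j = y j) → fq i x = fq i y)
    (hfq_norm : ∀ i x, ∑ v : Fin 2, fq i (Function.update x i v) = 1)
    (hfq_fact : ∀ x, q x = ∏ i, fq i x)                -- q is Markov w.r.t. the DAG
    -- positivity of P(B=b, V=v) on the support of (A, B), for both p and q
    (hpos : ∀ x, 0 < Pm p (Finset.univ.erase vI) x → ∀ v : Fin 2,
      0 < Pm p (Finset.univ.erase aI) (Function.update x vI v) ∧
      0 < Pm q (Finset.univ.erase aI) (Function.update x vI v))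
    -- value-sensitivity for p
    (hsens : ∀ x : ι → Fin 2,
      0 < Pm p (Finset.univ.erase aI) (Function.update x vI 0) →
      0 < Pm p (Finset.univ.erase aI) (Function.update x vI 1) →
      p (Function.update (Function.update x vI 1) aI 1) /
          Pm p (Finset.univ.erase aI) (Function.update x vI 1) ≠
        p (Function.update (Function.update x vI 0) aI 1) /
          Pm p (Finset.univ.erase aI) (Function.update x vI 0))
    -- agreement on P(A, B)
    (hAB : ∀ x, Pm p (Finset.univ.erase vI) x = Pm q (Finset.univ.erase vI) x)
    -- agreement on P(A | Pa(A))
    (hApa : ∀ x, 0 < Pm p (par aI) x → 0 < Pm q (par aI) x →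
      Pm p (insert aI (par aI)) x / Pm p (par aI) x =
        Pm q (insert aI (par aI)) x / Pm q (par aI) x) :
    -- (1) A is conditionally independent of the non-parents given its parents
    (∀ x, 0 < Pm p (Finset.univ.erase aI) x → 0 < Pm p (par aI) x →
      p x / Pm p (Finset.univ.erase aI) x =
        Pm p (insert aI (par aI)) x / Pm p (par aI) x) ∧
    -- (2) p and q agree on P(V | A, B)
    (∀ x, 0 < Pm p (Finset.univ.erase vI) x →
      p x / Pm p (Finset.univ.erase vI) x = q x / Pm q (Finset.univ.erase vI) x) :=
  stmt_4_general par vI aI hva hnoch p q hp0 hq0 fp fq hfp_loc hfp_norm hfp_fact hfq_loc hfq_norm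
    hfq_fact hpos hsens hAB hApa
end

section
/- If the joint distribution of (V, A, W, rest) is such that P(V=1 | A=1, W) = P(V=1 | A=1) (one-sided conditional independence), then the distributions P(V), P(A, W), P(V=1 | A=1), and P(W | V) jointly determine the full joint distribution P(A, V, W). That is, any two joint distributions agreeing on these four quantities and both satisfying one-sided conditional independence agree on P(A, V, W). -/
/-- Corollary 3 core: under one-sided conditional independence, the distributions
`P(V)`, `P(A, W)`, `P(V=1 | A=1)` and `P(W | V)` jointly determine the full joint
`P(A, V, W)`: any two joints (encoded `p v a w`) agreeing on these four quantities
and both satisfying one-sided conditional independence are equal. -/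
theorem stmt_7 {m : ℕ} (p q : Fin 2 → Fin 2 → (Fin m → Fin 2) → ℝ)
    (hpnn : ∀ v a w, 0 ≤ p v a w) (hpsum : ∑ v, ∑ a, ∑ w, p v a w = 1)
    (hqnn : ∀ v a w, 0 ≤ q v a w) (hqsum : ∑ v, ∑ a, ∑ w, q v a w = 1)
    -- positivity: P(A=1) > 0 and P(V=v) > 0, for both
    (hpA1 : 0 < ∑ v, ∑ w, p v 1 w) (hqA1 : 0 < ∑ v, ∑ w, q v 1 w)
    (hpV : ∀ v, 0 < ∑ a, ∑ w, p v a w) (hqV : ∀ v, 0 < ∑ a, ∑ w, q v a w)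
    -- one-sided conditional independence for both
    (hpoci : ∀ w, 0 < ∑ v, p v 1 w →
      p 1 1 w / (∑ v, p v 1 w) = (∑ w', p 1 1 w') / (∑ v, ∑ w', p v 1 w'))
    (hqoci : ∀ w, 0 < ∑ v, q v 1 w →
      q 1 1 w / (∑ v, q v 1 w) = (∑ w', q 1 1 w') / (∑ v, ∑ w', q v 1 w'))
    -- agreement on P(V)
    (hV : ∀ v, ∑ a, ∑ w, p v a w = ∑ a, ∑ w, q v a w)
    -- agreement on P(A, W)
    (hAW : ∀ a w, ∑ v, p v a w = ∑ v, q v a w)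
    -- agreement on P(V=1 | A=1)
    (hVA : (∑ w, p 1 1 w) / (∑ v, ∑ w, p v 1 w) =
           (∑ w, q 1 1 w) / (∑ v, ∑ w, q v 1 w))
    -- agreement on P(W | V)
    (hWV : ∀ w v, (∑ a, p v a w) / (∑ a, ∑ w', p v a w') =
                  (∑ a, q v a w) / (∑ a, ∑ w', q v a w')) :
    p = q := by
  -- step 1: p 1 1 w = q 1 1 w
  have h11 : ∀ w, p 1 1 w = q 1 1 w := by
    intro w
    have hS : (∑ v, p v 1 w) = ∑ v, q v 1 w := hAW 1 w
    rcases lt_or_eq_of_le (Finset.sum_nonneg (fun v _ => hpnn v 1 w)) with hpos | hzero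
    · have hne : (∑ v, p v 1 w) ≠ 0 := ne_of_gt hpos
      have hp := hpoci w hpos
      have hq := hqoci w (hS ▸ hpos)
      have hp' : p 1 1 w = ((∑ w', p 1 1 w') / (∑ v, ∑ w', p v 1 w')) * (∑ v, p v 1 w) := by
        rw [← hp, div_mul_cancel₀ _ hne]
      have hq' : q 1 1 w = ((∑ w', q 1 1 w') / (∑ v, ∑ w', q v 1 w')) * (∑ v, q v 1 w) := by
        rw [← hq, div_mul_cancel₀ _ (hS ▸ hne)]
      rw [hp', hq', hVA, hS]
    · have h0 : ∀ v ∈ Finset.univ, p v 1 w = 0 :=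
        (Finset.sum_eq_zero_iff_of_nonneg (fun v _ => hpnn v 1 w)).1 hzero.symm
      have h0q : ∀ v ∈ Finset.univ, q v 1 w = 0 :=
        (Finset.sum_eq_zero_iff_of_nonneg (fun v _ => hqnn v 1 w)).1 (hS ▸ hzero.symm)
      rw [h0 1 (Finset.mem_univ 1), h0q 1 (Finset.mem_univ 1)]
  -- step 2: p v 1 w = q v 1 w for all v
  have hA1 : ∀ v w, p v 1 w = q v 1 w := by
    intro v w
    have hS := hAW 1 w
    rw [Fin.sum_univ_two, Fin.sum_univ_two] at hS
    have h1 := h11 w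
    have h01 : p 0 1 w = q 0 1 w := by linarith
    fin_cases v
    · exact h01
    · exact h1
  -- step 3: ∑ a, p v a w = ∑ a, q v a w
  have hAsum : ∀ v w, (∑ a, p v a w) = ∑ a, q v a w := by
    intro v w
    have hD : (∑ a, ∑ w', p v a w') = ∑ a, ∑ w', q v a w' := hV v
    have hDne : (∑ a, ∑ w', p v a w') ≠ 0 := ne_of_gt (hpV v)
    have h := hWV w v
    rw [← hD] at h
    have h2 : (∑ a, p v a w) = ((∑ a, p v a w) / (∑ a, ∑ w', p v a w')) * (∑ a, ∑ w', p v a w') := (div_mul_cancel₀ _ hDne).symm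
    rw [h2, h, div_mul_cancel₀ _ hDne]
  -- step 4: conclude
  funext v a w
  have h1 := hA1 v w
  have h2 := hAsum v w
  rw [Fin.sum_univ_two, Fin.sum_univ_two] at h2
  have h0 : p v 0 w = q v 0 w := by linarith
  fin_cases a
  · exact h0
  · exact h1
end

section
/- Matrix adjustment for a child node: let V, A, X be binary random variables and W, Z binary random vectors with P(A=a | W=w, V=v, X, Z) = P(A=a | W=w, V=v) (A depends on the rest only through W and V). Define, for fixed w, matrices Q^w_{a,i} = P(X=1, Z=z_i, W=w, A=a) and R^w_{a,v} = P(A=a | W=w, V=v) and S^w_{v,i} = P(X=1, Z=z_i, W=w, V=v), where z_1,...,z_m enumerate realizations of Z. Then Q^w = R^w S^w, and if R^w is invertible then S^w = (R^w)^{-1} Q^w. -/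
/-- `Q^w_{a,i} = P(X=1, Z=z_i, W=w, A=a)` for the joint pmf `p v a x w z`. -/
noncomputable def Qmat {ω : Type} [Fintype ω] {m : ℕ}
    (p : Fin 2 → Fin 2 → Fin 2 → ω → Fin m → ℝ) (w : ω) : Matrix (Fin 2) (Fin m) ℝ :=
  Matrix.of fun a i => ∑ v, p v a 1 w i

/-- `R^w_{a,v} = P(A=a | W=w, V=v)`. -/
noncomputable def Rmat {ω : Type} [Fintype ω] {m : ℕ}
    (p : Fin 2 → Fin 2 → Fin 2 → ω → Fin m → ℝ) (w : ω) : Matrix (Fin 2) (Fin 2) ℝ :=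
  Matrix.of fun a v =>
    (∑ x, ∑ z, p v a x w z) / (∑ a', ∑ x, ∑ z, p v a' x w z)

/-- `S^w_{v,i} = P(X=1, Z=z_i, W=w, V=v)`. -/
noncomputable def Smat {ω : Type} [Fintype ω] {m : ℕ}
    (p : Fin 2 → Fin 2 → Fin 2 → ω → Fin m → ℝ) (w : ω) : Matrix (Fin 2) (Fin m) ℝ :=
  Matrix.of fun v i => ∑ a, p v a 1 w i

/-- Matrix adjustment for a child node: if `A` depends on the rest only through `W, V`,
then `Q^w = R^w S^w`, and if `R^w` is invertible, `S^w = (R^w)⁻¹ Q^w`. -/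
theorem stmt_10 {ω : Type} [Fintype ω] {m : ℕ}
    (p : Fin 2 → Fin 2 → Fin 2 → ω → Fin m → ℝ)
    (hnn : ∀ v a x w z, 0 ≤ p v a x w z)
    (hsum : ∑ v, ∑ a, ∑ x, ∑ w, ∑ z, p v a x w z = 1)
    (w : ω)
    -- P(W=w, V=v) > 0
    (hpos : ∀ v, 0 < ∑ a, ∑ x, ∑ z, p v a x w z)
    -- P(A=a | W=w', V=v, X=x, Z=z) = P(A=a | W=w', V=v)
    (hci : ∀ v a x (z : Fin m) (w' : ω), 0 < ∑ a', p v a' x w' z →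
      p v a x w' z / (∑ a', p v a' x w' z) =
        (∑ x', ∑ z', p v a x' w' z') / (∑ a', ∑ x', ∑ z', p v a' x' w' z')) :
    Qmat p w = Rmat p w * Smat p w ∧
      (IsUnit (Rmat p w).det → Smat p w = (Rmat p w)⁻¹ * Qmat p w) := by
  have hQRS : Qmat p w = Rmat p w * Smat p w := by
    ext a i
    simp only [Qmat, Rmat, Smat, Matrix.mul_apply, Matrix.of_apply]
    refine Finset.sum_congr rfl fun v _ => ?_
    by_cases h : 0 < ∑ a', p v a' 1 w i
    · have := (hci v a 1 i w h).symm
      rw [this, div_mul_cancel₀ _ (ne_of_gt h)]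
    · have hz : ∀ a' ∈ Finset.univ, p v a' 1 w i = 0 := by
        intro a' _
        by_contra hne
        have : 0 < ∑ a', p v a' 1 w i :=
          Finset.sum_pos' (fun b _ => hnn v b 1 w i)
            ⟨a', Finset.mem_univ a', lt_of_le_of_ne (hnn v a' 1 w i) (Ne.symm hne)⟩
        exact h this
      rw [hz a (Finset.mem_univ a), Finset.sum_eq_zero hz, mul_zero]
  refine ⟨hQRS, fun hu => ?_⟩
  rw [hQRS, ← Matrix.mul_assoc, Matrix.nonsing_inv_mul _ hu, Matrix.one_mul]
end

section
/- Marginalization recovers the joint with V: in the setting of the matrix adjustment method, summing the recovered matrices over w gives S := Σ_w S^w with S_{v,i} = P(X=1, Z=z_i, V=v); hence the conditional factor P(X=1 | Z=z_i, V=v) = S_{v,i} / P(Z=z_i, V=v) is identified whenever P(Z=z_i, V=v) > 0. -/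
/-- Marginalization recovers the joint with `V`: summing the recovered matrices
`S^w = (R^w)⁻¹ Q^w` over `w` gives `S_{v,i} = P(X=1, Z=z_i, V=v)`, identifying the
conditional factor `P(X=1 | Z=z_i, V=v)` whenever `P(Z=z_i, V=v) > 0`. -/
theorem stmt_11 {ω : Type} [Fintype ω] {m : ℕ}
    (p : Fin 2 → Fin 2 → Fin 2 → ω → Fin m → ℝ)
    (hnn : ∀ v a x w z, 0 ≤ p v a x w z)
    (hsum : ∑ v, ∑ a, ∑ x, ∑ w, ∑ z, p v a x w z = 1)
    -- P(W=w, V=v) > 0 for all w, v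
    (hpos : ∀ (w : ω) v, 0 < ∑ a, ∑ x, ∑ z, p v a x w z)
    -- P(A=a | W=w, V=v, X=x, Z=z) = P(A=a | W=w, V=v)
    (hci : ∀ v a x (z : Fin m) (w : ω), 0 < ∑ a', p v a' x w z →
      p v a x w z / (∑ a', p v a' x w z) =
        (∑ x', ∑ z', p v a x' w z') / (∑ a', ∑ x', ∑ z', p v a' x' w z'))
    -- each R^w is invertible
    (hinv : ∀ w : ω, IsUnit (Rmat p w).det) :
    (∀ v i, (∑ w : ω, (Rmat p w)⁻¹ * Qmat p w) v i = ∑ w, ∑ a, p v a 1 w i) ∧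
    (∀ v i, 0 < ∑ a, ∑ x, ∑ w, p v a x w i →
      (∑ w : ω, (Rmat p w)⁻¹ * Qmat p w) v i / (∑ a, ∑ x, ∑ w, p v a x w i) =
        (∑ w, ∑ a, p v a 1 w i) / (∑ a, ∑ x, ∑ w, p v a x w i)) := by
  have key : ∀ w : ω, (Rmat p w)⁻¹ * Qmat p w =
      Matrix.of (fun v i => ∑ a, p v a 1 w i) := by
    intro w
    have hQ : Qmat p w = Rmat p w * Matrix.of (fun v i => ∑ a, p v a 1 w i) := by
      ext a i
      simp only [Qmat, Rmat, Matrix.mul_apply, Matrix.of_apply]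
      refine Finset.sum_congr rfl (fun v _ => ?_)
      rcases eq_or_lt_of_le (Finset.sum_nonneg (fun a' _ => hnn v a' 1 w i))
        with hs | hs
      · have hz := hs.symm
        have h0 : p v a 1 w i = 0 :=
          (Finset.sum_eq_zero_iff_of_nonneg
            (fun a' _ => hnn v a' 1 w i)).mp hz a (Finset.mem_univ a)
        rw [h0, hz, mul_zero]
      · have h := hci v a 1 i w hs
        rw [div_eq_div_iff hs.ne' (hpos w v).ne'] at h
        rw [div_mul_eq_mul_div, eq_div_iff (hpos w v).ne']
        linarith
    rw [hQ, ← Matrix.mul_assoc, Matrix.nonsing_inv_mul _ (hinv w), Matrix.one_mul]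
  have h1 : ∀ v i, (∑ w : ω, (Rmat p w)⁻¹ * Qmat p w) v i = ∑ w, ∑ a, p v a 1 w i := by
    intro v i
    rw [Finset.sum_congr rfl (fun w _ => key w)]
    simp [Matrix.sum_apply]
  exact ⟨h1, fun v i _ => by rw [h1]⟩
end

section
/- Uniqueness in Theorem 1 via pointwise matrix inversion: suppose two joint pmfs P and P′ over binary (V, A, B) satisfy (i) P(A, B) = P′(A, B), (ii) P(A | B=b, V=v) = P′(A | B=b, V=v) for all (b,v) where both are defined, (iii) both assign positive probability to (B=b, V=v) for all b in the support of B and v ∈ {0,1}, and (iv) the value-sensitivity condition holds for P. Then P(B=b, V=v) = P′(B=b, V=v) for all b, v, and hence P = P′ on the full joint of (V, A, B). -/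
/-- Uniqueness in Theorem 1 via pointwise matrix inversion: two joint pmfs `p, q` over
`(V, A, B)` (encoded `p v a b`) agreeing on `P(A, B)` and on `P(A | B, V)` (where defined),
with positivity of `P(B=b, V=v)` on the support of `B` and value-sensitivity for `p`,
agree on `P(B, V)` and hence on the full joint. -/
theorem stmt_16 {n : ℕ} (p q : Fin 2 → Fin 2 → (Fin n → Fin 2) → ℝ)
    (hpnn : ∀ v a b, 0 ≤ p v a b) (hpsum : ∑ v, ∑ a, ∑ b, p v a b = 1)
    (hqnn : ∀ v a b, 0 ≤ q v a b) (hqsum : ∑ v, ∑ a, ∑ b, q v a b = 1)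
    -- (i) agreement on P(A, B)
    (hAB : ∀ a b, ∑ v, p v a b = ∑ v, q v a b)
    -- (ii) agreement on P(A | B, V) wherever both are defined
    (hAcond : ∀ v b, 0 < ∑ a, p v a b → 0 < ∑ a, q v a b →
      ∀ a, p v a b / (∑ a', p v a' b) = q v a b / (∑ a', q v a' b))
    -- (iii) positivity of P(B=b, V=v) on the support of B, for both p and q
    (hposp : ∀ b, 0 < ∑ v, ∑ a, p v a b → ∀ v, 0 < ∑ a, p v a b)
    (hposq : ∀ b, 0 < ∑ v, ∑ a, q v a b → ∀ v, 0 < ∑ a, q v a b)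
    -- (iv) value-sensitivity for p, on the support of B
    (hsens : ∀ b, 0 < ∑ v, ∑ a, p v a b →
      p 1 1 b / (∑ a, p 1 a b) ≠ p 0 1 b / (∑ a, p 0 a b)) :
    (∀ v b, ∑ a, p v a b = ∑ a, q v a b) ∧ p = q := by
  have key : ∀ b v a, p v a b = q v a b := by
    intro b
    have hs : ∑ v, ∑ a, p v a b = ∑ v, ∑ a, q v a b := by
      calc ∑ v, ∑ a, p v a b = ∑ a, ∑ v, p v a b := Finset.sum_comm
        _ = ∑ a, ∑ v, q v a b := Finset.sum_congr rfl (fun a _ => hAB a b)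
        _ = ∑ v, ∑ a, q v a b := Finset.sum_comm
    by_cases h : 0 < ∑ v, ∑ a, p v a b
    · have hmp : ∀ v, 0 < ∑ a, p v a b := hposp b h
      have hmq : ∀ v, 0 < ∑ a, q v a b := hposq b (hs ▸ h)
      have hc : ∀ v a, p v a b / (∑ a', p v a' b) = q v a b / (∑ a', q v a' b) :=
        fun v => hAcond v b (hmp v) (hmq v)
      have h1 : p 0 1 b * (∑ a, q 0 a b) = q 0 1 b * (∑ a, p 0 a b) :=
        (div_eq_div_iff (hmp 0).ne' (hmq 0).ne').mp (hc 0 1)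
      have h2 : p 1 1 b * (∑ a, q 1 a b) = q 1 1 b * (∑ a, p 1 a b) :=
        (div_eq_div_iff (hmp 1).ne' (hmq 1).ne').mp (hc 1 1)
      have h3 : p 0 1 b + p 1 1 b = q 0 1 b + q 1 1 b := by
        have := hAB 1 b; simpa [Fin.sum_univ_two] using this
      have h4 : (∑ a, p 0 a b) + (∑ a, p 1 a b) = (∑ a, q 0 a b) + (∑ a, q 1 a b) := by
        simpa [Fin.sum_univ_two] using hs
      have hne : p 1 1 b * (∑ a, p 0 a b) ≠ p 0 1 b * (∑ a, p 1 a b) := by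
        intro heq
        apply hsens b h
        rw [div_eq_div_iff (hmp 1).ne' (hmp 0).ne']
        linarith [heq]
      have hd : ((∑ a, p 0 a b) - (∑ a, q 0 a b)) *
          (p 0 1 b * (∑ a, p 1 a b) - p 1 1 b * (∑ a, p 0 a b)) = 0 := by
        linear_combination (∑ a, p 0 a b) * (∑ a, p 1 a b) * h3 - (∑ a, p 1 a b) * h1
          - (∑ a, p 0 a b) * h2 - p 1 1 b * (∑ a, p 0 a b) * h4
      have hm0 : (∑ a, p 0 a b) = (∑ a, q 0 a b) := by
        rcases mul_eq_zero.mp hd with h' | h'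
        · linarith
        · exact absurd (by linarith : p 1 1 b * (∑ a, p 0 a b) = p 0 1 b * (∑ a, p 1 a b)) hne
      have hm1 : (∑ a, p 1 a b) = (∑ a, q 1 a b) := by linarith
      have e01 : p 0 1 b = q 0 1 b := by
        have := h1; rw [← hm0] at this
        exact mul_right_cancel₀ (hmp 0).ne' this
      have e11 : p 1 1 b = q 1 1 b := by
        have := h2; rw [← hm1] at this
        exact mul_right_cancel₀ (hmp 1).ne' this
      have sp0 : (∑ a, p 0 a b) = p 0 0 b + p 0 1 b := Fin.sum_univ_two _
      have sp1 : (∑ a, p 1 a b) = p 1 0 b + p 1 1 b := Fin.sum_univ_two _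
      have sq0 : (∑ a, q 0 a b) = q 0 0 b + q 0 1 b := Fin.sum_univ_two _
      have sq1 : (∑ a, q 1 a b) = q 1 0 b + q 1 1 b := Fin.sum_univ_two _
      intro v a
      fin_cases v <;> fin_cases a <;> simp_all <;> linarith
    · have hz : ∑ v, ∑ a, p v a b = 0 :=
        le_antisymm (not_lt.mp h)
          (Finset.sum_nonneg fun v _ => Finset.sum_nonneg fun a _ => hpnn v a b)
      have hzq : ∑ v, ∑ a, q v a b = 0 := hs ▸ hz
      intro v a
      have hp0 : p v a b = 0 := by
        have h1 := (Finset.sum_eq_zero_iff_of_nonneg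
          (fun v _ => Finset.sum_nonneg fun a _ => hpnn v a b)).mp hz v (Finset.mem_univ v)
        exact (Finset.sum_eq_zero_iff_of_nonneg (fun a _ => hpnn v a b)).mp h1 a
          (Finset.mem_univ a)
      have hq0 : q v a b = 0 := by
        have h1 := (Finset.sum_eq_zero_iff_of_nonneg
          (fun v _ => Finset.sum_nonneg fun a _ => hqnn v a b)).mp hzq v (Finset.mem_univ v)
        exact (Finset.sum_eq_zero_iff_of_nonneg (fun a _ => hqnn v a b)).mp h1 a
          (Finset.mem_univ a)
      rw [hp0, hq0]
  refine ⟨fun v b => Finset.sum_congr rfl fun a _ => key b v a, ?_⟩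
  funext v a b
  exact key b v a
end
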